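/- arXiv:1302.3811 — 2 statements merged into one kernel-verified Lean document; each statement's English description precedes it below -/
import Mathlib

section
/- Let M_1, …, M_k be matroids on the same finite ground set E. Suppose there exist sets V_1, …, V_k ⊆ E such that V_i is independent in M_i for each i and V_1 ∪ … ∪ V_k = E. Then Alice wins the generalized indicated coloring game on M_1, …, M_k from the everywhere-uncolored position. -/
open Function

/-- A partial coloring `c` (with `none` meaning "uncolored") of the ground set `E` is proper
for the family of matroids `M` when, for each color `j`, the elements of `E` colored `j`
form an independent set of the matroid `M j`. -/
def ProperColoring {α : Type*} {k : ℕ} (M : Fin k → Matroid α) (E : Set α)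
    (c : α → Option (Fin k)) : Prop :=
  ∀ j : Fin k, (M j).Indep {x ∈ E | c x = some j}

/-- Coloring one more element strictly decreases the number of uncolored elements. -/
theorem uncolored_update_lt {α β : Type*} [DecidableEq α] {E : Set α} (hE : E.Finite)
    {c : α → Option β} {e : α} (he : e ∈ E) (hce : c e = none) (j : β) :
    {x ∈ E | Function.update c e (some j) x = none}.ncard < {x ∈ E | c x = none}.ncard := by
  apply Set.ncard_lt_ncard
  · constructor
    · rintro x ⟨hxE, hxc⟩
      refine ⟨hxE, ?_⟩
      rcases eq_or_ne x e with rfl | hne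
      · simp [Function.update_self] at hxc
      · rwa [Function.update_of_ne hne] at hxc
    · intro hsub
      have := hsub ⟨he, hce⟩
      simp [Function.update_self] at this
  · exact hE.subset (Set.sep_subset _ _)

/-- Alice wins the generalized indicated coloring game on the matroids `M 0, …, M (k-1)`
(all on the finite ground set `E`) from the partial coloring `c`, defined by recursion on
the number of uncolored elements: either every element of `E` is colored, or there is an
uncolored element `e ∈ E` such that (i) at least one color can be assigned to `e` keeping
the coloring proper, and (ii) for every color whose assignment to `e` keeps the coloring
proper, Alice wins from the extended coloring. -/
def AliceWins {α : Type*} [DecidableEq α] {k : ℕ} (M : Fin k → Matroid α) (E : Set α)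
    (hE : E.Finite) (c : α → Option (Fin k)) : Prop :=
  (∀ e ∈ E, c e ≠ none) ∨
    ∃ e, ∃ _ : e ∈ E, ∃ _ : c e = none,
      (∃ j : Fin k, ProperColoring M E (Function.update c e (some j))) ∧
      ∀ j : Fin k, ProperColoring M E (Function.update c e (some j)) →
        AliceWins M E hE (Function.update c e (some j))
termination_by {x ∈ E | c x = none}.ncard
decreasing_by all_goals (apply uncolored_update_lt <;> assumption)

/-!
Alice keeps the coloring proper and *feasible*: every set `S` of uncolored elements satisfies
`|S| ≤ ∑ i, (rᵢ (S ∪ Cᵢ) - rᵢ Cᵢ)`, where `Cᵢ` is the `i`-th color class. By the matroid union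
theorem this says that the uncolored elements can still be covered by sets independent in the
contractions `Mᵢ / Cᵢ`. Initially it follows from the cover `V`, and for `S = {e}` it gives every
uncolored `e` a legal color.

Call `S` tight when equality holds. Tight sets are closed under intersection, and two tight sets
form a modular pair in every `Mᵢ / Cᵢ`. Alice names an element `e` of an inclusion-minimal
nonempty tight set `A` (any element if there is none). After a legal color `j` is given to `e`,
feasibility can only fail at a tight set `S` avoiding `e` that spans `e` in `M_j / C_j`. But
`S ∩ A` is tight and misses `e`, so it is empty, and then modularity of `(S, A)` in `M_j / C_j`
is incompatible with `S` spanning the element `e ∈ A`, which is independent there.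
-/

open Set

namespace Matroid

variable {α : Type*} {N : Matroid α} {I X Y Z : Set α} {e : α}

/-- The rank as a natural number; it is the junk value `0` on sets of infinite rank, so every
lemma below assumes finiteness. -/
noncomputable def natRk (N : Matroid α) (X : Set α) : ℕ := (N.eRk X).toNat

lemma cast_natRk (hX : X.Finite) : (N.natRk X : ℕ∞) = N.eRk X :=
  ENat.natCast_toNat ((N.eRk_le_encard X).trans_lt hX.encard_lt_top).ne

@[simp]
lemma natRk_empty : N.natRk ∅ = 0 := by
  simp [natRk]

lemma natRk_mono (hY : Y.Finite) (hXY : X ⊆ Y) : N.natRk X ≤ N.natRk Y := by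
  rw [← Nat.cast_le (α := ℕ∞), cast_natRk (hY.subset hXY), cast_natRk hY]
  exact N.eRk_mono hXY

lemma natRk_insert_le_add_one (hX : X.Finite) (e : α) :
    N.natRk (insert e X) ≤ N.natRk X + 1 := by
  rw [← Nat.cast_le (α := ℕ∞), Nat.cast_add, Nat.cast_one, cast_natRk (hX.insert e),
    cast_natRk hX]
  exact N.eRk_insert_le_add_one e X

lemma natRk_union_add_natRk_inter_le (hX : X.Finite) (hY : Y.Finite) :
    N.natRk (X ∪ Y) + N.natRk (X ∩ Y) ≤ N.natRk X + N.natRk Y := by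
  rw [← Nat.cast_le (α := ℕ∞), Nat.cast_add, Nat.cast_add, cast_natRk (hX.union hY),
    cast_natRk (hX.inter_of_left Y), cast_natRk hX, cast_natRk hY, add_comm]
  exact N.eRk_inter_add_eRk_union_le X Y

lemma indep_iff_natRk_eq_ncard (hI : I.Finite) : N.Indep I ↔ N.natRk I = I.ncard := by
  rw [indep_iff_eRk_eq_encard_of_finite hI, ← cast_natRk hI, ← hI.cast_ncard_eq, Nat.cast_inj]

lemma Indep.ncard_le_natRk (hI : N.Indep I) (hIX : I ⊆ X) (hX : X.Finite) :
    I.ncard ≤ N.natRk X :=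
  ((indep_iff_natRk_eq_ncard (hX.subset hIX)).1 hI).ge.trans (natRk_mono hX hIX)

lemma Indep.natRk_lt_natRk_insert_iff (hI : N.Indep I) (hIfin : I.Finite) (he : e ∉ I) :
    N.natRk I < N.natRk (insert e I) ↔ N.Indep (insert e I) := by
  have hrk := (indep_iff_natRk_eq_ncard hIfin).1 hI
  have hle := natRk_insert_le_add_one (N := N) hIfin e
  rw [indep_iff_natRk_eq_ncard (hIfin.insert e), ncard_insert_of_notMem he hIfin]
  omega

/-- Submodularity applied to `insert e X` and `Y`. -/
lemma natRk_union_add_natRk_lt (hX : X.Finite) (hY : Y.Finite) (hZX : Z ⊆ X) (hZY : Z ⊆ Y)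
    (heY : e ∈ Y) (heX : N.natRk (insert e X) ≤ N.natRk X)
    (heZ : N.natRk Z < N.natRk (insert e Z)) :
    N.natRk (X ∪ Y) + N.natRk Z < N.natRk X + N.natRk Y := by
  have hsub := natRk_union_add_natRk_inter_le (N := N) (hX.insert e) hY
  rw [insert_union, insert_eq_of_mem (mem_union_right X heY)] at hsub
  have hinter : N.natRk (insert e Z) ≤ N.natRk (insert e X ∩ Y) :=
    natRk_mono ((hX.insert e).inter_of_left Y)
      (insert_subset ⟨mem_insert e X, heY⟩ (subset_inter (hZX.trans (subset_insert e X)) hZY))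
  omega

lemma ncard_le_sum_natRk_of_subset_iUnion {ι : Type*} [Fintype ι] {M : ι → Matroid α}
    {V : ι → Set α} (hV : ∀ i, (M i).Indep (V i)) {S : Set α} (hS : S.Finite)
    (hSV : S ⊆ ⋃ i, V i) : S.ncard ≤ ∑ i, (M i).natRk S :=
  calc S.ncard = (⋃ i, V i ∩ S).ncard := by rw [← iUnion_inter, inter_eq_right.2 hSV]
    _ ≤ ∑ i, (V i ∩ S).ncard := ncard_iUnion_le_of_fintype _
    _ ≤ ∑ i, (M i).natRk S := Finset.sum_le_sum fun i _ =>
      ((hV i).subset inter_subset_left).ncard_le_natRk inter_subset_right hS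

end Matroid

namespace IndicatedColoring

variable {α : Type*} {k : ℕ} {M : Fin k → Matroid α} {E : Set α} {c : α → Option (Fin k)}
  {S A : Set α} {e : α} {i j : Fin k}

def colorClass (E : Set α) (c : α → Option (Fin k)) (i : Fin k) : Set α := {x ∈ E | c x = some i}

def uncolored (E : Set α) (c : α → Option (Fin k)) : Set α := {x ∈ E | c x = none}

lemma colorClass_subset : colorClass E c i ⊆ E := sep_subset _ _

lemma uncolored_subset : uncolored E c ⊆ E := sep_subset _ _

lemma notMem_colorClass (he : e ∈ uncolored E c) (i : Fin k) : e ∉ colorClass E c i :=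
  fun h => by simp [colorClass, he.2] at h

noncomputable def coverRank (M : Fin k → Matroid α) (E : Set α) (c : α → Option (Fin k))
    (S : Set α) : ℕ :=
  ∑ i, (M i).natRk (S ∪ colorClass E c i)

def IsTight (M : Fin k → Matroid α) (E : Set α) (c : α → Option (Fin k)) (S : Set α) : Prop :=
  S.ncard + coverRank M E c ∅ = coverRank M E c S

def IsFeasible (M : Fin k → Matroid α) (E : Set α) (c : α → Option (Fin k)) : Prop :=
  ∀ S ⊆ uncolored E c, S.ncard + coverRank M E c ∅ ≤ coverRank M E c S

lemma natRk_union_add_natRk_inter_le_colorClass (hE : E.Finite) (hS : S ⊆ E) (hA : A ⊆ E)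
    (i : Fin k) :
    (M i).natRk (S ∪ A ∪ colorClass E c i) + (M i).natRk (S ∩ A ∪ colorClass E c i) ≤
      (M i).natRk (S ∪ colorClass E c i) + (M i).natRk (A ∪ colorClass E c i) := by
  have hC : (colorClass E c i).Finite := hE.subset colorClass_subset
  rw [union_union_distrib_right, inter_union_distrib_right]
  exact Matroid.natRk_union_add_natRk_inter_le ((hE.subset hS).union hC) ((hE.subset hA).union hC)

lemma coverRank_union_add_inter_le (hE : E.Finite) (hS : S ⊆ E) (hA : A ⊆ E) :
    coverRank M E c (S ∪ A) + coverRank M E c (S ∩ A) ≤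
      coverRank M E c S + coverRank M E c A := by
  simp only [coverRank, ← Finset.sum_add_distrib]
  exact Finset.sum_le_sum fun i _ => natRk_union_add_natRk_inter_le_colorClass hE hS hA i

lemma IsFeasible.coverRank_union_add_inter_eq (hF : IsFeasible M E c) (hE : E.Finite)
    (hS : S ⊆ uncolored E c) (hA : A ⊆ uncolored E c) (hST : IsTight M E c S)
    (hAT : IsTight M E c A) :
    coverRank M E c (S ∪ A) + coverRank M E c (S ∩ A) =
      coverRank M E c S + coverRank M E c A := by
  have hsub := coverRank_union_add_inter_le (c := c) (M := M) hE (hS.trans uncolored_subset)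
    (hA.trans uncolored_subset)
  have hcard := ncard_union_add_ncard_inter S A (hE.subset (hS.trans uncolored_subset))
    (hE.subset (hA.trans uncolored_subset))
  have hunion := hF (S ∪ A) (union_subset hS hA)
  have hinter := hF (S ∩ A) (inter_subset_left.trans hS)
  unfold IsTight at hST hAT
  omega

lemma IsFeasible.isTight_inter (hF : IsFeasible M E c) (hE : E.Finite)
    (hS : S ⊆ uncolored E c) (hA : A ⊆ uncolored E c) (hST : IsTight M E c S)
    (hAT : IsTight M E c A) : IsTight M E c (S ∩ A) := by
  have heq := hF.coverRank_union_add_inter_eq hE hS hA hST hAT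
  have hcard := ncard_union_add_ncard_inter S A (hE.subset (hS.trans uncolored_subset))
    (hE.subset (hA.trans uncolored_subset))
  have hunion := hF (S ∪ A) (union_subset hS hA)
  have hinter := hF (S ∩ A) (inter_subset_left.trans hS)
  unfold IsTight at hST hAT ⊢
  omega

lemma IsFeasible.natRk_union_add_natRk_inter_eq (hF : IsFeasible M E c) (hE : E.Finite)
    (hS : S ⊆ uncolored E c) (hA : A ⊆ uncolored E c) (hST : IsTight M E c S)
    (hAT : IsTight M E c A) (i : Fin k) :
    (M i).natRk (S ∪ A ∪ colorClass E c i) + (M i).natRk (S ∩ A ∪ colorClass E c i) =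
      (M i).natRk (S ∪ colorClass E c i) + (M i).natRk (A ∪ colorClass E c i) := by
  have heq := hF.coverRank_union_add_inter_eq hE hS hA hST hAT
  simp only [coverRank, ← Finset.sum_add_distrib] at heq
  exact (Finset.sum_eq_sum_iff_of_le fun i _ => natRk_union_add_natRk_inter_le_colorClass hE
    (hS.trans uncolored_subset) (hA.trans uncolored_subset) i).1 heq i (Finset.mem_univ i)

def IsSafe (M : Fin k → Matroid α) (E : Set α) (c : α → Option (Fin k)) (e : α) : Prop :=
  ∀ S ⊆ uncolored E c, e ∉ S → IsTight M E c S → ∀ j, (M j).Indep (insert e (colorClass E c j)) →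
    (M j).natRk (S ∪ colorClass E c j) < (M j).natRk (insert e (S ∪ colorClass E c j))

lemma isSafe_of_forall_not_isTight (hE : E.Finite) (hc : ProperColoring M E c)
    (he : e ∈ uncolored E c) (hT : ∀ S ⊆ uncolored E c, S.Nonempty → ¬IsTight M E c S) :
    IsSafe M E c e := by
  intro S hS _ hST j hj
  obtain rfl : S = ∅ := not_nonempty_iff_eq_empty.1 fun hne => hT S hS hne hST
  rw [empty_union]
  exact ((hc j).natRk_lt_natRk_insert_iff (hE.subset colorClass_subset)
    (notMem_colorClass he j)).2 hj

lemma IsFeasible.isSafe_of_minimal (hF : IsFeasible M E c) (hE : E.Finite)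
    (hc : ProperColoring M E c)
    (hA : Minimal (fun A => A ⊆ uncolored E c ∧ A.Nonempty ∧ IsTight M E c A) A)
    (heA : e ∈ A) : IsSafe M E c e := by
  obtain ⟨⟨hAU, -, hAT⟩, hmin⟩ := hA
  intro S hSU heS hST j hj
  have hSA : S ∩ A = ∅ := by
    by_contra hne
    exact heS (hmin ⟨inter_subset_left.trans hSU, nonempty_iff_ne_empty.2 hne,
      hF.isTight_inter hE hSU hAU hST hAT⟩ inter_subset_right heA).1
  have hmod := hF.natRk_union_add_natRk_inter_eq hE hSU hAU hST hAT j
  rw [hSA, empty_union] at hmod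
  have hC : (colorClass E c j).Finite := hE.subset colorClass_subset
  by_contra! hspan
  have hstrict := Matroid.natRk_union_add_natRk_lt
    ((hE.subset (hSU.trans uncolored_subset)).union hC)
    ((hE.subset (hAU.trans uncolored_subset)).union hC) subset_union_right subset_union_right
    (Or.inl heA) hspan
    (((hc j).natRk_lt_natRk_insert_iff hC (notMem_colorClass (hAU heA) j)).2 hj)
  rw [← union_union_distrib_right] at hstrict
  omega

lemma IsFeasible.exists_isSafe (hF : IsFeasible M E c) (hE : E.Finite)
    (hc : ProperColoring M E c) (hU : (uncolored E c).Nonempty) :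
    ∃ e ∈ uncolored E c, IsSafe M E c e := by
  by_cases hT : ∃ S ⊆ uncolored E c, S.Nonempty ∧ IsTight M E c S
  · have hfin : {A | A ⊆ uncolored E c ∧ A.Nonempty ∧ IsTight M E c A}.Finite :=
      (hE.subset uncolored_subset).finite_subsets.subset fun A hA => hA.1
    obtain ⟨S, hSU, hS⟩ := hT
    obtain ⟨A, hA⟩ := hfin.exists_minimal ⟨S, hSU, hS⟩
    obtain ⟨e, heA⟩ := hA.1.2.1
    exact ⟨e, hA.1.1 heA, hF.isSafe_of_minimal hE hc hA heA⟩
  · push Not at hT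
    obtain ⟨e, he⟩ := hU
    exact ⟨e, he, isSafe_of_forall_not_isTight hE hc he hT⟩

lemma IsFeasible.exists_indep_insert (hF : IsFeasible M E c) (hE : E.Finite)
    (hc : ProperColoring M E c) (he : e ∈ uncolored E c) :
    ∃ j, (M j).Indep (insert e (colorClass E c j)) := by
  have hsingle := hF {e} (singleton_subset_iff.2 he)
  rw [ncard_singleton] at hsingle
  have hlt : coverRank M E c ∅ < coverRank M E c {e} := by omega
  simp only [coverRank, empty_union, singleton_union] at hlt
  obtain ⟨j, -, hj⟩ := Finset.exists_lt_of_sum_lt hlt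
  exact ⟨j, ((hc j).natRk_lt_natRk_insert_iff (hE.subset colorClass_subset)
    (notMem_colorClass he j)).1 hj⟩

section Update

variable [DecidableEq α]

lemma colorClass_update_self (he : e ∈ E) (j : Fin k) :
    colorClass E (update c e (some j)) j = insert e (colorClass E c j) := by
  ext x
  rcases eq_or_ne x e with rfl | hx <;> simp [colorClass, *]

lemma colorClass_update_of_ne (hce : c e = none) (hij : i ≠ j) :
    colorClass E (update c e (some j)) i = colorClass E c i := by
  ext x
  rcases eq_or_ne x e with rfl | hx <;> simp [colorClass, *, Ne.symm hij]

lemma uncolored_update (j : Fin k) :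
    uncolored E (update c e (some j)) = uncolored E c \ {e} := by
  ext x
  rcases eq_or_ne x e with rfl | hx <;> simp [uncolored, *]

lemma properColoring_update_iff (hc : ProperColoring M E c) (he : e ∈ uncolored E c) :
    ProperColoring M E (update c e (some j)) ↔ (M j).Indep (insert e (colorClass E c j)) := by
  refine ⟨fun h => colorClass_update_self he.1 j ▸ (h j : (M j).Indep (colorClass E _ j)),
    fun h i => ?_⟩
  show (M i).Indep (colorClass E _ i)
  rcases eq_or_ne i j with rfl | hij
  · rwa [colorClass_update_self he.1]
  · rw [colorClass_update_of_ne he.2 hij]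
    exact hc i

lemma coverRank_update_add (he : e ∈ uncolored E c) (j : Fin k) (S : Set α) :
    coverRank M E (update c e (some j)) S + (M j).natRk (S ∪ colorClass E c j) =
      coverRank M E c S + (M j).natRk (insert e (S ∪ colorClass E c j)) := by
  unfold coverRank
  rw [← Finset.sum_erase_add _ _ (Finset.mem_univ j),
    ← Finset.sum_erase_add _ _ (Finset.mem_univ j), colorClass_update_self he.1, union_insert,
    Finset.sum_congr rfl fun i hi => by
      rw [colorClass_update_of_ne he.2 (Finset.ne_of_mem_erase hi)]]
  ring

/-- Coloring `e` raises `coverRank ∅` by one; a set that is not tight has room for this, and a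
tight one gains as much because `e` is safe. -/
lemma IsFeasible.update (hF : IsFeasible M E c) (hE : E.Finite) (he : e ∈ uncolored E c)
    (hsafe : IsSafe M E c e) (hj : (M j).Indep (insert e (colorClass E c j))) :
    IsFeasible M E (update c e (some j)) := by
  intro S hS
  rw [uncolored_update, subset_sdiff, disjoint_singleton_right] at hS
  obtain ⟨hSU, heS⟩ := hS
  have hC : (colorClass E c j).Finite := hE.subset colorClass_subset
  have hSC : (S ∪ colorClass E c j).Finite := (hE.subset (hSU.trans uncolored_subset)).union hC
  have hempty := coverRank_update_add (M := M) he j ∅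
  rw [empty_union] at hempty
  have hins := Matroid.natRk_insert_le_add_one (N := M j) hC e
  have hrank := coverRank_update_add (M := M) he j S
  have hmono := Matroid.natRk_mono (N := M j) (hSC.insert e) (subset_insert e _)
  rcases (hF S hSU).lt_or_eq with hlt | htight
  · omega
  · have := hsafe S hSU heS htight j hj
    omega

end Update

lemma properColoring_none : ProperColoring M E fun _ => none := fun j => by
  simp

lemma isFeasible_none_of_subset_iUnion (hE : E.Finite) {V : Fin k → Set α}
    (hV : ∀ i, (M i).Indep (V i)) (hEV : E ⊆ ⋃ i, V i) : IsFeasible M E fun _ => none := by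
  intro S hS
  have hSE : S ⊆ E := hS.trans uncolored_subset
  simpa [coverRank, colorClass] using
    Matroid.ncard_le_sum_natRk_of_subset_iUnion hV (hE.subset hSE) (hSE.trans hEV)

theorem aliceWins_of_isFeasible [DecidableEq α] (hE : E.Finite) (hc : ProperColoring M E c)
    (hF : IsFeasible M E c) : AliceWins M E hE c := by
  induction hn : (uncolored E c).ncard using Nat.strong_induction_on generalizing c with
  | _ n ih =>
  rw [AliceWins]
  by_cases hU : (uncolored E c).Nonempty
  · obtain ⟨e, he, hsafe⟩ := hF.exists_isSafe hE hc hU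
    obtain ⟨j₀, hj₀⟩ := hF.exists_indep_insert hE hc he
    refine Or.inr ⟨e, he.1, he.2, ⟨j₀, (properColoring_update_iff hc he).2 hj₀⟩, fun j hj => ?_⟩
    exact ih _ (hn ▸ uncolored_update_lt hE he.1 he.2 j) hj
      (hF.update hE he hsafe ((properColoring_update_iff hc he).1 hj)) rfl
  · exact Or.inl fun e he hce => hU ⟨e, he, hce⟩

end IndicatedColoring

theorem aliceWins_of_cover_general {α : Type*} [DecidableEq α] {k : ℕ} (M : Fin k → Matroid α)
    (E : Set α) (hE : E.Finite)
    (V : Fin k → Set α) (hV : ∀ i, (M i).Indep (V i)) (hcover : ⋃ i, V i = E) :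
    AliceWins M E hE (fun _ => none) :=
  IndicatedColoring.aliceWins_of_isFeasible hE IndicatedColoring.properColoring_none
    (IndicatedColoring.isFeasible_none_of_subset_iUnion hE hV hcover.ge)

/-- If `E` is covered by sets `V i` independent in the respective matroids `M i`, then
Alice wins the generalized indicated coloring game from the everywhere-uncolored position. -/
theorem aliceWins_of_cover {α : Type*} [DecidableEq α] {k : ℕ} (M : Fin k → Matroid α)
    (E : Set α) (hE : E.Finite) (hground : ∀ i, (M i).E = E)
    (V : Fin k → Set α) (hV : ∀ i, (M i).Indep (V i)) (hcover : ⋃ i, V i = E) :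
    AliceWins M E hE (fun _ => none) :=
  aliceWins_of_cover_general M E hE V hV hcover
end

section
/- Let M_1, …, M_k be matroids on the same finite ground set E. Suppose there exist sets V_1, …, V_k ⊆ E such that V_i is independent in M_i for each i and V_1 ∪ … ∪ V_k = E. Then Alice wins the generalized modified indicated coloring game on M_1, …, M_k from the everywhere-uncolored position. -/
open Function

/-- Alice wins the generalized modified indicated coloring game on the matroids
`M 0, …, M (k-1)` (all on the finite ground set `E`) from the partial coloring `c`;
defined by recursion on the number of uncolored elements: either every element of `E` is
colored, or both of the following hold: (i) there is an uncolored element `e ∈ E` such that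
at least one color can be assigned to `e` keeping the coloring proper, and for every such
color Alice wins from the extended coloring (Alice indicates, Bob colors); and (ii) for
every uncolored element `e ∈ E` there is a color whose assignment to `e` keeps the coloring
proper and such that Alice wins from the extended coloring (Bob indicates, Alice colors). -/
def AliceWinsMod {α : Type*} [DecidableEq α] {k : ℕ} (M : Fin k → Matroid α) (E : Set α)
    (hE : E.Finite) (c : α → Option (Fin k)) : Prop :=
  (∀ e ∈ E, c e ≠ none) ∨
    ((∃ e, ∃ _ : e ∈ E, ∃ _ : c e = none,
        (∃ j : Fin k, ProperColoring M E (Function.update c e (some j))) ∧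
        ∀ j : Fin k, ProperColoring M E (Function.update c e (some j)) →
          AliceWinsMod M E hE (Function.update c e (some j))) ∧
      (∀ e, e ∈ E → c e = none →
        ∃ j : Fin k, ProperColoring M E (Function.update c e (some j)) ∧
          AliceWinsMod M E hE (Function.update c e (some j))))
termination_by {x ∈ E | c x = none}.ncard
decreasing_by all_goals (apply uncolored_update_lt <;> assumption)

/-!
Alice keeps the matroid partition condition `|X| + #(colored) ≤ ∑ⱼ rⱼ(X ∪ Cⱼ)` for every set `X`
of uncolored elements, where `Cⱼ` is the `j`-th color class; at the start it follows from the
cover. Call `X` tight when equality holds; by submodularity of the ranks, tight sets are closed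
under `∪` and `∩`. Coloring `e` with `j` preserves the condition as soon as no tight set avoiding
`e` spans `e` in `Mⱼ` together with `Cⱼ`. When Bob indicates `e`, the largest tight set `T`
avoiding `e` cannot span `e` in every `Mⱼ`, since `T ∪ {e}` would then violate the condition; a
color where it does not is safe. Alice indicates an element `e` of a minimal nonempty tight set
`T` (any uncolored element if there is none): a tight set `X` avoiding `e` is then disjoint from
`T` and `(X ∪ Cⱼ, T ∪ Cⱼ)` is a modular pair in `Mⱼ`, so `X ∪ Cⱼ` spans `e` only if `Cⱼ` does, and
every color Bob may legally use is safe.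
-/

open Set

namespace Matroid

variable {α : Type*} {M : Matroid α} {I X Y : Set α} {e : α}

/-- `0` on sets of infinite rank. -/
noncomputable def rk (M : Matroid α) (X : Set α) : ℕ := (M.eRk X).toNat

theorem Indep.rk_eq_ncard (hI : M.Indep I) : M.rk I = I.ncard := by
  rw [rk, hI.eRk_eq_encard, ncard_def]

theorem IsRkFinite.rk_le_rk_of_subset (hY : M.IsRkFinite Y) (hXY : X ⊆ Y) : M.rk X ≤ M.rk Y :=
  ENat.toNat_le_toNat (M.eRk_mono hXY) hY.eRk_lt_top.ne

theorem rk_insert_of_notMem_diff_closure (he : e ∉ M.E \ M.closure X) :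
    M.rk (insert e X) = M.rk X := by
  rw [rk, rk]
  by_cases heE : e ∈ M.E
  · rw [← eRk_closure_eq, closure_insert_eq_of_mem_closure (by_contra fun h => he ⟨heE, h⟩),
      eRk_closure_eq]
  · rw [eRk_insert_of_notMem_ground X heE]

theorem rk_insert_of_mem_diff_closure (hX : M.IsRkFinite X)
    (he : e ∈ M.E \ M.closure X) : M.rk (insert e X) = M.rk X + 1 := by
  rw [rk, rk, eRk_insert_eq_add_one he, ENat.toNat_add hX.eRk_lt_top.ne ENat.one_ne_top]
  rfl

theorem IsRkFinite.rk_inter_add_rk_union_le (hX : M.IsRkFinite X) (hY : M.IsRkFinite Y) :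
    M.rk (X ∩ Y) + M.rk (X ∪ Y) ≤ M.rk X + M.rk Y := by
  have h := ENat.toNat_le_toNat (M.eRk_submod X Y)
    (WithTop.add_ne_top.2 ⟨hX.eRk_lt_top.ne, hY.eRk_lt_top.ne⟩)
  rwa [ENat.toNat_add hX.inter_right.eRk_lt_top.ne (hX.union hY).eRk_lt_top.ne,
    ENat.toNat_add hX.eRk_lt_top.ne hY.eRk_lt_top.ne] at h

theorem IsRkFinite.mem_closure_inter_of_rk_inter_add_rk_union_eq (hX : M.IsRkFinite X)
    (hY : M.IsRkFinite Y) (hmod : M.rk (X ∩ Y) + M.rk (X ∪ Y) = M.rk X + M.rk Y)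
    (heX : e ∈ M.closure X) (heY : e ∈ Y) : e ∈ M.closure (X ∩ Y) := by
  by_contra h
  have hsub := (hX.insert e).rk_inter_add_rk_union_le hY
  rw [insert_union, insert_eq_of_mem (mem_union_right X heY), insert_inter_of_mem heY,
    rk_insert_of_mem_diff_closure hX.inter_right ⟨M.closure_subset_ground X heX, h⟩,
    rk_insert_of_notMem_diff_closure fun h' => h'.2 heX] at hsub
  omega

end Matroid

namespace MatroidColoring

variable {α ι : Type*} {M : ι → Matroid α} {E A B T X : Set α} {c : α → Option ι} {e : α}
  {j : ι}

def colorClass (E : Set α) (c : α → Option ι) (j : ι) : Set α := {x ∈ E | c x = some j}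

def uncolored (E : Set α) (c : α → Option ι) : Set α := {x ∈ E | c x = none}

theorem colorClass_subset : colorClass E c j ⊆ E := sep_subset _ _

theorem uncolored_subset : uncolored E c ⊆ E := sep_subset _ _

theorem notMem_colorClass (hce : c e = none) : e ∉ colorClass E c j := fun h => by
  simp [colorClass, hce] at h

theorem colorClass_none : colorClass E (fun _ => none) j = ∅ := by
  simp [colorClass]

theorem insert_indep_colorClass_iff (hp : (M j).Indep (colorClass E c j)) (hce : c e = none) :
    (M j).Indep (insert e (colorClass E c j)) ↔
      e ∈ (M j).E \ (M j).closure (colorClass E c j) :=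
  hp.insert_indep_iff_of_notMem (notMem_colorClass hce)

theorem isRkFinite_union_colorClass (hE : E.Finite) (N : Matroid α) (hX : X ⊆ E) :
    N.IsRkFinite (X ∪ colorClass E c j) :=
  N.isRkFinite_of_finite (hE.subset (union_subset hX colorClass_subset))

theorem rk_union_colorClass_inter_add_union_le (hE : E.Finite) (N : Matroid α) (hA : A ⊆ E)
    (hB : B ⊆ E) :
    N.rk (A ∩ B ∪ colorClass E c j) + N.rk (A ∪ B ∪ colorClass E c j) ≤
      N.rk (A ∪ colorClass E c j) + N.rk (B ∪ colorClass E c j) := by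
  rw [inter_union_distrib_right, union_union_distrib_right]
  exact (isRkFinite_union_colorClass hE N hA).rk_inter_add_rk_union_le
    (isRkFinite_union_colorClass hE N hB)

section Update

variable [DecidableEq α]

theorem colorClass_update_self (he : e ∈ E) :
    colorClass E (update c e (some j)) j = insert e (colorClass E c j) := by
  ext x
  rcases eq_or_ne x e with rfl | hne
  · simp [colorClass, he]
  · simp [colorClass, hne]

theorem colorClass_update_of_ne {i : ι} (hce : c e = none) (hij : i ≠ j) :
    colorClass E (update c e (some j)) i = colorClass E c i := by
  ext x
  rcases eq_or_ne x e with rfl | hne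
  · simp [colorClass, hce, hij.symm]
  · simp [colorClass, update_of_ne hne]

theorem uncolored_update : uncolored E (update c e (some j)) = uncolored E c \ {e} := by
  ext x
  rcases eq_or_ne x e with rfl | hne
  · simp [uncolored]
  · simp [uncolored, hne]

theorem indep_colorClass_update (hp : ∀ i, (M i).Indep (colorClass E c i))
    (he : e ∈ uncolored E c) (hind : (M j).Indep (insert e (colorClass E c j))) (i : ι) :
    (M i).Indep (colorClass E (update c e (some j)) i) := by
  rcases eq_or_ne i j with rfl | hij
  · rwa [colorClass_update_self he.1]
  · rw [colorClass_update_of_ne he.2 hij]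
    exact hp i

theorem rk_union_colorClass_le_update (hE : E.Finite) (hX : X ⊆ E) (he : e ∈ uncolored E c)
    (i : ι) :
    (M i).rk (X ∪ colorClass E c i) ≤ (M i).rk (X ∪ colorClass E (update c e (some j)) i) := by
  rcases eq_or_ne i j with rfl | hij
  · rw [colorClass_update_self he.1, union_insert]
    exact ((isRkFinite_union_colorClass hE _ hX).insert e).rk_le_rk_of_subset (subset_insert _ _)
  · rw [colorClass_update_of_ne he.2 hij]

end Update

variable [Fintype ι]

noncomputable def numColored (E : Set α) (c : α → Option ι) : ℕ :=
  ∑ j, (colorClass E c j).ncard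

noncomputable def capacity (M : ι → Matroid α) (E : Set α) (c : α → Option ι) (X : Set α) : ℕ :=
  ∑ j, (M j).rk (X ∪ colorClass E c j)

/-- The matroid partition condition for the uncolored elements in the contractions `M j / Cⱼ`,
where `Cⱼ = colorClass E c j`: if `Cⱼ` is independent, `X` has rank `rⱼ(X ∪ Cⱼ) - |Cⱼ|` there. -/
def HallCondition (M : ι → Matroid α) (E : Set α) (c : α → Option ι) : Prop :=
  ∀ X ⊆ uncolored E c, X.ncard + numColored E c ≤ capacity M E c X

def IsTight (M : ι → Matroid α) (E : Set α) (c : α → Option ι) (X : Set α) : Prop :=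
  X ⊆ uncolored E c ∧ capacity M E c X = X.ncard + numColored E c

def IsSafe (M : ι → Matroid α) (E : Set α) (c : α → Option ι) (e : α) (j : ι) : Prop :=
  ∀ X, IsTight M E c X → e ∉ X → e ∉ (M j).closure (X ∪ colorClass E c j)

theorem numColored_update_le [DecidableEq α] (he : e ∈ uncolored E c) :
    numColored E (update c e (some j)) ≤ numColored E c + 1 := by
  classical
  calc numColored E (update c e (some j))
      ≤ ∑ i, ((colorClass E c i).ncard + if i = j then 1 else 0) := by
        refine Finset.sum_le_sum fun i _ => ?_
        rcases eq_or_ne i j with rfl | hij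
        · simpa [colorClass_update_self he.1] using ncard_insert_le e _
        · simp [colorClass_update_of_ne he.2 hij, hij]
    _ = numColored E c + 1 := by simp [Finset.sum_add_distrib, numColored]

theorem isTight_empty (hp : ∀ j, (M j).Indep (colorClass E c j)) : IsTight M E c ∅ :=
  ⟨empty_subset _, by
    simp only [capacity, numColored, empty_union, ncard_empty, zero_add]
    exact Finset.sum_congr rfl fun j _ => (hp j).rk_eq_ncard⟩

theorem hallCondition_none (hE : E.Finite) {V : ι → Set α} (hV : ∀ i, (M i).Indep (V i))
    (hcover : E ⊆ ⋃ i, V i) : HallCondition M E fun _ => none := by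
  intro X hX
  have hXE : X ⊆ E := hX.trans uncolored_subset
  simp only [numColored, capacity, colorClass_none, union_empty, ncard_empty,
    Finset.sum_const_zero, add_zero]
  calc X.ncard = (⋃ i ∈ Finset.univ, X ∩ V i).ncard := by
        simp [← inter_iUnion, inter_eq_left.2 (hXE.trans hcover)]
    _ ≤ ∑ i, (X ∩ V i).ncard := Finset.set_ncard_biUnion_le _ _
    _ = ∑ i, (M i).rk (X ∩ V i) :=
        Finset.sum_congr rfl fun i _ => ((hV i).subset inter_subset_right).rk_eq_ncard.symm
    _ ≤ ∑ i, (M i).rk X := Finset.sum_le_sum fun i _ =>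
        ((M i).isRkFinite_of_finite (hE.subset hXE)).rk_le_rk_of_subset inter_subset_left

section FiniteGround

variable (hE : E.Finite)
include hE

theorem capacity_inter_add_capacity_union_le (hA : A ⊆ E) (hB : B ⊆ E) :
    capacity M E c (A ∩ B) + capacity M E c (A ∪ B) ≤ capacity M E c A + capacity M E c B := by
  simp only [capacity, ← Finset.sum_add_distrib]
  exact Finset.sum_le_sum fun j _ => rk_union_colorClass_inter_add_union_le hE _ hA hB

theorem HallCondition.isTight_inter_and_union (hall : HallCondition M E c)
    (hA : IsTight M E c A) (hB : IsTight M E c B) :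
    IsTight M E c (A ∩ B) ∧ IsTight M E c (A ∪ B) := by
  have hAE := hA.1.trans uncolored_subset
  have hBE := hB.1.trans uncolored_subset
  have hinter := hall (A ∩ B) (inter_subset_left.trans hA.1)
  have hunion := hall (A ∪ B) (union_subset hA.1 hB.1)
  have hsub := capacity_inter_add_capacity_union_le (M := M) (c := c) hE hAE hBE
  have hcard := ncard_inter_add_ncard_union A B (hE.subset hAE) (hE.subset hBE)
  have := hA.2
  have := hB.2
  exact ⟨⟨inter_subset_left.trans hA.1, by omega⟩, ⟨union_subset hA.1 hB.1, by omega⟩⟩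

theorem HallCondition.rk_inter_add_rk_union_eq (hall : HallCondition M E c)
    (hA : IsTight M E c A) (hB : IsTight M E c B) (j : ι) :
    (M j).rk ((A ∪ colorClass E c j) ∩ (B ∪ colorClass E c j)) +
        (M j).rk ((A ∪ colorClass E c j) ∪ (B ∪ colorClass E c j)) =
      (M j).rk (A ∪ colorClass E c j) + (M j).rk (B ∪ colorClass E c j) := by
  have hAE := hA.1.trans uncolored_subset
  have hBE := hB.1.trans uncolored_subset
  obtain ⟨hinter, hunion⟩ := hall.isTight_inter_and_union hE hA hB
  have hsum : capacity M E c (A ∩ B) + capacity M E c (A ∪ B) =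
      capacity M E c A + capacity M E c B := by
    have := ncard_inter_add_ncard_union A B (hE.subset hAE) (hE.subset hBE)
    rw [hinter.2, hunion.2, hA.2, hB.2]
    omega
  simp only [capacity, ← Finset.sum_add_distrib] at hsum
  have hj := (Finset.sum_eq_sum_iff_of_le fun i _ =>
    rk_union_colorClass_inter_add_union_le hE (M i) hAE hBE).1 hsum j (Finset.mem_univ j)
  rwa [inter_union_distrib_right, union_union_distrib_right] at hj

theorem HallCondition.exists_isGreatest_isTight_notMem
    (hp : ∀ j, (M j).Indep (colorClass E c j)) (hall : HallCondition M E c) (e : α) :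
    ∃ T, IsGreatest {X | IsTight M E c X ∧ e ∉ X} T := by
  have hfin : {X | IsTight M E c X ∧ e ∉ X}.Finite :=
    (hE.subset uncolored_subset).finite_subsets.subset fun X hX => hX.1.1
  obtain ⟨T, hT⟩ := hfin.exists_maximal ⟨∅, isTight_empty hp, notMem_empty e⟩
  refine ⟨T, hT.prop, fun X ⟨hX, heX⟩ => subset_union_left.trans (hT.2 ?_ subset_union_right)⟩
  exact ⟨(hall.isTight_inter_and_union hE hX hT.prop.1).2, by simp [heX, hT.prop.2]⟩

theorem HallCondition.exists_isSafe (hp : ∀ j, (M j).Indep (colorClass E c j))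
    (hall : HallCondition M E c) (he : e ∈ uncolored E c) :
    ∃ j, (M j).Indep (insert e (colorClass E c j)) ∧ IsSafe M E c e j := by
  obtain ⟨T, ⟨hT, heT⟩, hTmax⟩ := hall.exists_isGreatest_isTight_notMem hE hp e
  obtain ⟨j, hj⟩ : ∃ j, e ∈ (M j).E \ (M j).closure (T ∪ colorClass E c j) := by
    by_contra h
    have hcap : capacity M E c (insert e T) ≤ capacity M E c T :=
      Finset.sum_le_sum fun j _ => by
        rw [insert_union, Matroid.rk_insert_of_notMem_diff_closure (not_exists.1 h j)]
    have hHall := hall _ (insert_subset he hT.1)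
    rw [ncard_insert_of_notMem heT (hE.subset (hT.1.trans uncolored_subset))] at hHall
    have := hT.2
    omega
  refine ⟨j, (insert_indep_colorClass_iff (hp j) he.2).2 ⟨hj.1, fun h => hj.2 ?_⟩,
    fun X hX heX hcl => hj.2 ?_⟩
  · exact (M j).closure_subset_closure subset_union_right h
  · exact (M j).closure_subset_closure (union_subset_union_left _ (hTmax ⟨hX, heX⟩)) hcl

theorem HallCondition.notMem_closure_of_isTight (hp : ∀ j, (M j).Indep (colorClass E c j))
    (hall : HallCondition M E c) (hT : IsTight M E c T) (heT : e ∈ T) (hX : IsTight M E c X)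
    (hXT : X ∩ T = ∅) (hind : (M j).Indep (insert e (colorClass E c j))) :
    e ∉ (M j).closure (X ∪ colorClass E c j) := by
  intro hcl
  have hspan := (isRkFinite_union_colorClass hE (M j) (hX.1.trans uncolored_subset))
    |>.mem_closure_inter_of_rk_inter_add_rk_union_eq
      (isRkFinite_union_colorClass hE (M j) (hT.1.trans uncolored_subset))
      (hall.rk_inter_add_rk_union_eq hE hX hT j) hcl (mem_union_left _ heT)
  rw [← inter_union_distrib_right, hXT, empty_union] at hspan
  exact ((insert_indep_colorClass_iff (hp j) (hT.1 heT).2).1 hind).2 hspan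

theorem HallCondition.exists_forall_isSafe (hp : ∀ j, (M j).Indep (colorClass E c j))
    (hall : HallCondition M E c) (hU : (uncolored E c).Nonempty) :
    ∃ e ∈ uncolored E c, ∀ j, (M j).Indep (insert e (colorClass E c j)) → IsSafe M E c e j := by
  by_cases hex : ∃ T, IsTight M E c T ∧ T.Nonempty
  · have hfin : {T | IsTight M E c T ∧ T.Nonempty}.Finite :=
      (hE.subset uncolored_subset).finite_subsets.subset fun T hT => hT.1.1
    obtain ⟨T, hT⟩ := hfin.exists_minimal hex
    obtain ⟨e, heT⟩ := hT.prop.2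
    refine ⟨e, hT.prop.1.1 heT, fun j hind X hX heX => ?_⟩
    refine hall.notMem_closure_of_isTight hE hp hT.prop.1 heT hX ?_ hind
    by_contra hne
    have hXT := (hall.isTight_inter_and_union hE hX hT.prop.1).1
    exact heX (hT.2 ⟨hXT, nonempty_iff_ne_empty.2 hne⟩ inter_subset_right heT).1
  · obtain ⟨e, he⟩ := hU
    refine ⟨e, he, fun j hind X hX _ => ?_⟩
    obtain rfl : X = ∅ := not_nonempty_iff_eq_empty.1 fun hne => hex ⟨X, hX, hne⟩
    rw [empty_union]
    exact ((insert_indep_colorClass_iff (hp j) he.2).1 hind).2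

section Update

variable [DecidableEq α]

theorem capacity_lt_capacity_update (hX : X ⊆ E) (he : e ∈ uncolored E c)
    (hej : e ∈ (M j).E \ (M j).closure (X ∪ colorClass E c j)) :
    capacity M E c X < capacity M E (update c e (some j)) X := by
  refine Finset.sum_lt_sum (fun i _ => rk_union_colorClass_le_update hE hX he i)
    ⟨j, Finset.mem_univ j, ?_⟩
  rw [colorClass_update_self he.1, union_insert,
    Matroid.rk_insert_of_mem_diff_closure (isRkFinite_union_colorClass hE _ hX) hej]
  omega

theorem HallCondition.update_of_isSafe (hall : HallCondition M E c) (he : e ∈ uncolored E c)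
    (hind : (M j).Indep (insert e (colorClass E c j))) (hsafe : IsSafe M E c e j) :
    HallCondition M E (update c e (some j)) := by
  intro X hX
  rw [uncolored_update] at hX
  have hXU : X ⊆ uncolored E c := hX.trans sdiff_subset
  have hXE : X ⊆ E := hXU.trans uncolored_subset
  have hcolored := numColored_update_le (j := j) he
  by_cases htight : IsTight M E c X
  · have hej : e ∈ (M j).E \ (M j).closure (X ∪ colorClass E c j) :=
      ⟨hind.subset_ground (mem_insert e _), hsafe X htight fun h => (hX h).2 rfl⟩
    have hlt := capacity_lt_capacity_update hE hXE he hej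
    have := htight.2
    omega
  · have hle : capacity M E c X ≤ capacity M E (update c e (some j)) X :=
      Finset.sum_le_sum fun i _ => rk_union_colorClass_le_update hE hXE he i
    have hslack : capacity M E c X ≠ X.ncard + numColored E c := fun h => htight ⟨hXU, h⟩
    have := hall X hXU
    omega

end Update

end FiniteGround

theorem aliceWinsMod_of_hallCondition [DecidableEq α] {k : ℕ} {M : Fin k → Matroid α}
    (hE : E.Finite) {c : α → Option (Fin k)} (hp : ProperColoring M E c)
    (hall : HallCondition M E c) : AliceWinsMod M E hE c := by
  induction hn : (uncolored E c).ncard using Nat.strong_induction_on generalizing c with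
  | _ n ih =>
  have hwin : ∀ e ∈ uncolored E c, ∀ j, (M j).Indep (insert e (colorClass E c j)) →
      IsSafe M E c e j → AliceWinsMod M E hE (update c e (some j)) := by
    intro e he j hind hsafe
    refine ih _ ?_ (indep_colorClass_update hp he hind) (hall.update_of_isSafe hE he hind hsafe) rfl
    rw [← hn]
    exact uncolored_update_lt hE he.1 he.2 j
  rw [AliceWinsMod]
  rcases (uncolored E c).eq_empty_or_nonempty with hU | hU
  · exact .inl fun e he hce => hU.subset ⟨he, hce⟩
  refine .inr ⟨?_, fun e he hce => ?_⟩
  · obtain ⟨e, he, hsafe⟩ := hall.exists_forall_isSafe hE hp hU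
    obtain ⟨j₀, hind₀, -⟩ := hall.exists_isSafe hE hp he
    refine ⟨e, he.1, he.2, ⟨j₀, indep_colorClass_update hp he hind₀⟩, fun j hpj => ?_⟩
    have hind : (M j).Indep (insert e (colorClass E c j)) := colorClass_update_self he.1 ▸ hpj j
    exact hwin e he j hind (hsafe j hind)
  · obtain ⟨j, hind, hsafe⟩ := hall.exists_isSafe hE hp ⟨he, hce⟩
    exact ⟨j, indep_colorClass_update hp ⟨he, hce⟩ hind, hwin e ⟨he, hce⟩ j hind hsafe⟩

end MatroidColoring

theorem aliceWinsMod_of_cover_general {α : Type*} [DecidableEq α] {k : ℕ} (M : Fin k → Matroid α)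
    (E : Set α) (hE : E.Finite)
    (V : Fin k → Set α) (hV : ∀ i, (M i).Indep (V i)) (hcover : ⋃ i, V i = E) :
    AliceWinsMod M E hE (fun _ => none) :=
  MatroidColoring.aliceWinsMod_of_hallCondition hE (fun j => by simp)
    (MatroidColoring.hallCondition_none hE hV hcover.ge)

/-- If `E` is covered by sets `V i` independent in the respective matroids `M i`, then Alice
wins the generalized modified indicated coloring game from the everywhere-uncolored
position. -/
theorem aliceWinsMod_of_cover {α : Type*} [DecidableEq α] {k : ℕ} (M : Fin k → Matroid α)
    (E : Set α) (hE : E.Finite) (hground : ∀ i, (M i).E = E)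
    (V : Fin k → Set α) (hV : ∀ i, (M i).Indep (V i)) (hcover : ⋃ i, V i = E) :
    AliceWinsMod M E hE (fun _ => none) :=
  aliceWinsMod_of_cover_general M E hE V hV hcover
end
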